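/- The family of functions φ_k(ω) = π^{-1/2} (1 - iω)^{-1} ((1 + iω)/(1 - iω))^k, for k ∈ ℤ, forms a complete orthonormal set (Hilbert basis) in L²(ℝ) with the standard inner product ⟨f,g⟩ = ∫ f*(ω) g(ω) dω. -/

import Mathlib

open MeasureTheory Complex

/-- The functions `φ_k(ω) = π^{-1/2} (1 - iω)^{-1} ((1 + iω)/(1 - iω))^k`. -/
noncomputable def phi (k : ℤ) (ω : ℝ) : ℂ :=
  (Real.pi : ℂ)⁻¹ ^ (1/2 : ℂ) * (1 - I * ω)⁻¹ * ((1 + I * ω) / (1 - I * ω)) ^ k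

/-!
Substituting `ω = tan (θ / 2)` turns `(1 + iω) / (1 - iω)` into `e^{iθ}` and pushes the Cauchy
measure `dω / (π (1 + ω²))` forward to the normalised Haar measure `dθ / 2π` on the circle.
Hence `φ_k = w · (e_k ∘ θ)` with `|w|² = 1 / (π (1 + ω²))`, and multiplication by `w` after
composition with `θ` is a unitary `L²(circle) → L²(ℝ)` carrying the Fourier basis `e_k` to `φ_k`.
-/

open Set
open scoped ENNReal ComplexConjugate Real

/-- A complete orthonormal family in `L²(μ)`, phrased through integrals of functions `X → ℂ`
rather than through the Hilbert space `Lp ℂ 2 μ`. -/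
structure IsCompleteOrthonormal {X ι : Type*} [MeasurableSpace X] [DecidableEq ι]
    (μ : Measure X) (e : ι → X → ℂ) : Prop where
  memLp : ∀ k, MemLp (e k) 2 μ
  integral_conj_mul : ∀ j k, ∫ x, conj (e j x) * e k x ∂μ = if j = k then 1 else 0
  ae_eq_zero : ∀ f, MemLp f 2 μ → (∀ k, ∫ x, conj (e k x) * f x ∂μ = 0) → f =ᵐ[μ] 0

theorem HilbertBasis.isCompleteOrthonormal {X ι : Type*} [MeasurableSpace X] [DecidableEq ι]
    {μ : Measure X} (b : HilbertBasis ι ℂ (Lp ℂ 2 μ)) {e : ι → X → ℂ} (hbe : ∀ k, b k =ᵐ[μ] e k) :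
    IsCompleteOrthonormal μ e := by
  have inner_eq (k : ι) {F : Lp ℂ 2 μ} {f : X → ℂ} (hF : F =ᵐ[μ] f) :
      inner ℂ (b k) F = ∫ x, conj (e k x) * f x ∂μ := by
    rw [L2.inner_def]
    refine integral_congr_ae ?_
    filter_upwards [hbe k, hF] with x hbx hFx
    rw [hbx, hFx, RCLike.inner_apply']
  refine ⟨fun k => (Lp.memLp (b k)).ae_eq (hbe k), fun j k => ?_, fun f hf hf0 => ?_⟩
  · rw [← inner_eq j (hbe k), orthonormal_iff_ite.mp b.orthonormal]
  · have hzero : hf.toLp f = 0 :=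
      b.repr.map_eq_zero_iff.mp <| lp.ext <| funext fun k => by
        rw [b.repr_apply_apply, inner_eq k hf.coeFn_toLp, hf0 k]
        rfl
    filter_upwards [hf.coeFn_toLp, Lp.coeFn_zero ℂ 2 μ] with x hfx h0x
    rw [← hfx, hzero, h0x]

theorem isCompleteOrthonormal_fourier {T : ℝ} [Fact (0 < T)] :
    IsCompleteOrthonormal AddCircle.haarAddCircle fun k => ⇑(fourier (T := T) k) :=
  fourierBasis.isCompleteOrthonormal fun k => by
    rw [coe_fourierBasis]
    exact coeFn_fourierLp 2 k

section WeightedComposition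

variable {X Y ι : Type*} [MeasurableSpace X] [MeasurableSpace Y] {μ : Measure X} {ν : Measure Y}
  {T : X → Y} {w : X → ℂ}

theorem eLpNorm_withDensity_enorm_rpow (hw : Measurable w) {p : ℝ≥0∞} (hp0 : p ≠ 0)
    (hp : p ≠ ∞) (u : X → ℂ) :
    eLpNorm u p (μ.withDensity fun x => ‖w x‖ₑ ^ p.toReal) = eLpNorm (fun x => w x * u x) p μ := by
  have hfin : ∀ᵐ x ∂μ, ‖w x‖ₑ ^ p.toReal < ∞ :=
    .of_forall fun x => ENNReal.rpow_lt_top_of_nonneg ENNReal.toReal_nonneg enorm_ne_top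
  rw [eLpNorm_eq_lintegral_rpow_enorm_toReal hp0 hp, eLpNorm_eq_lintegral_rpow_enorm_toReal hp0 hp,
    lintegral_withDensity_eq_lintegral_mul_non_measurable _ (hw.enorm.pow_const _) hfin]
  simp only [Pi.mul_apply, enorm_mul, ENNReal.mul_rpow_of_nonneg _ _ ENNReal.toReal_nonneg]

theorem memLp_withDensity_enorm_rpow_iff (hw : Measurable w) (hw0 : ∀ x, w x ≠ 0) {p : ℝ≥0∞}
    (hp0 : p ≠ 0) (hp : p ≠ ∞) {u : X → ℂ} :
    MemLp u p (μ.withDensity fun x => ‖w x‖ₑ ^ p.toReal) ↔ MemLp (fun x => w x * u x) p μ := by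
  have hac : μ ≪ μ.withDensity fun x => ‖w x‖ₑ ^ p.toReal :=
    withDensity_absolutelyContinuous' (hw.enorm.pow_const _).aemeasurable <| .of_forall fun x =>
      (ENNReal.rpow_pos (enorm_pos.mpr (hw0 x)) enorm_ne_top).ne'
  have hmeas : AEStronglyMeasurable u (μ.withDensity fun x => ‖w x‖ₑ ^ p.toReal) ↔
      AEStronglyMeasurable (fun x => w x * u x) μ := by
    refine ⟨fun hu => hw.aestronglyMeasurable.mul (hu.mono_ac hac), fun hwu => ?_⟩
    have hu : AEStronglyMeasurable (fun x => w x * u x / w x) μ := hwu.div₀ hw.aestronglyMeasurable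
    simp only [mul_div_cancel_left₀ (u _) (hw0 _)] at hu
    exact hu.mono_ac (withDensity_absolutelyContinuous _ _)
  rw [MemLp, MemLp, hmeas, eLpNorm_withDensity_enorm_rpow hw hp0 hp]

theorem memLp_two_weightedComp_iff (hT : MeasurableEmbedding T) (hw : Measurable w)
    (hw0 : ∀ x, w x ≠ 0) (hTw : MeasurePreserving T (μ.withDensity fun x => ‖w x‖ₑ ^ 2) ν)
    {g : Y → ℂ} : MemLp (fun x => w x * g (T x)) 2 μ ↔ MemLp g 2 ν := by
  have h := memLp_withDensity_enorm_rpow_iff (μ := μ) hw hw0 two_ne_zero ENNReal.ofNat_ne_top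
    (u := g ∘ T)
  simp only [ENNReal.toReal_ofNat, ENNReal.rpow_ofNat, Function.comp_apply] at h
  rw [← h, ← hT.memLp_map_measure_iff, hTw.map_eq]

theorem integral_conj_weightedComp_mul (hT : MeasurableEmbedding T) (hw : Measurable w)
    (hTw : MeasurePreserving T (μ.withDensity fun x => ‖w x‖ₑ ^ 2) ν) (a b : Y → ℂ) :
    ∫ x, conj (w x * a (T x)) * (w x * b (T x)) ∂μ = ∫ y, conj (a y) * b y ∂ν := by
  have hdens : (fun x => ‖w x‖ₑ ^ 2) = fun x => ((‖w x‖₊ ^ 2 : NNReal) : ℝ≥0∞) := by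
    funext x
    rw [ENNReal.coe_pow, enorm_eq_nnnorm]
  rw [← hTw.integral_comp hT, hdens, integral_withDensity_eq_integral_smul (by fun_prop)]
  refine integral_congr_ae (.of_forall fun x => ?_)
  simp only [map_mul, NNReal.smul_def, NNReal.coe_pow, coe_nnnorm, real_smul, ofReal_pow,
    ← Complex.conj_mul']
  ring

theorem IsCompleteOrthonormal.weightedComp [DecidableEq ι] {e : ι → Y → ℂ}
    (he : IsCompleteOrthonormal ν e) (hT : MeasurableEmbedding T) (hw : Measurable w)
    (hw0 : ∀ x, w x ≠ 0) (hTw : MeasurePreserving T (μ.withDensity fun x => ‖w x‖ₑ ^ 2) ν) :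
    IsCompleteOrthonormal μ fun k x => w x * e k (T x) := by
  refine ⟨fun k => (memLp_two_weightedComp_iff hT hw hw0 hTw).mpr (he.memLp k), fun j k => ?_,
    fun f hf hf0 => ?_⟩
  · rw [integral_conj_weightedComp_mul hT hw hTw, he.integral_conj_mul]
  set G := Function.extend T (fun x => f x / w x) 0 with hG
  have hwG (x : X) : w x * G (T x) = f x := by
    rw [hG, hT.injective.extend_apply, mul_div_cancel₀ _ (hw0 x)]
  have hG0 : G =ᵐ[ν] 0 := by
    refine he.ae_eq_zero G ((memLp_two_weightedComp_iff hT hw hw0 hTw).mp ?_) fun k => ?_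
    · simpa only [hwG] using hf
    · simpa only [← integral_conj_weightedComp_mul hT hw hTw, hwG] using hf0 k
  have hac : μ ≪ μ.withDensity fun x => ‖w x‖ₑ ^ 2 :=
    withDensity_absolutelyContinuous' (hw.enorm.pow_const _).aemeasurable <| .of_forall fun x =>
      pow_ne_zero 2 (enorm_ne_zero.mpr (hw0 x))
  filter_upwards [hac (hTw.quasiMeasurePreserving.ae_eq_comp hG0)] with x hx
  simp only [Function.comp_apply, Pi.zero_apply] at hx
  rw [← hwG x, hx, Pi.zero_apply, mul_zero]

end WeightedComposition

local instance : Fact (0 < 2 * π) := ⟨Real.two_pi_pos⟩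

theorem range_two_mul_arctan : range (fun ω => 2 * Real.arctan ω) = Ioo (-π) π := by
  rw [range_comp' (2 * ·) Real.arctan, Real.range_arctan, image_mul_left_Ioo two_pos]
  ring_nf

theorem lintegral_Ioo_neg_pi_pi_eq_lintegral_two_mul_arctan (g : ℝ → ℝ≥0∞) :
    ∫⁻ θ in Ioo (-π) π, g θ = ∫⁻ ω, ENNReal.ofReal (2 / (1 + ω ^ 2)) * g (2 * Real.arctan ω) := by
  have hderiv (ω : ℝ) : HasDerivAt (fun ω => 2 * Real.arctan ω) (2 / (1 + ω ^ 2)) ω :=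
    ((Real.hasDerivAt_arctan ω).const_mul 2).congr_deriv (mul_one_div _ _)
  have hinj : Function.Injective fun ω => 2 * Real.arctan ω :=
    (mul_right_injective₀ two_ne_zero).comp Real.arctan_injective
  have h := lintegral_image_eq_lintegral_abs_deriv_mul MeasurableSet.univ
    (fun ω _ => (hderiv ω).hasDerivWithinAt) hinj.injOn g
  rw [image_univ, range_two_mul_arctan] at h
  rw [h, Measure.restrict_univ]
  simp only [abs_of_pos (by positivity : (0 : ℝ) < 2 / (1 + _ ^ 2))]

theorem one_sub_I_mul_ne_zero (ω : ℝ) : 1 - I * ω ≠ 0 := fun h => by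
  simpa using congrArg re h

theorem cexp_two_mul_arctan_mul_I (ω : ℝ) :
    cexp (2 * Real.arctan ω * I) = (1 + I * ω) / (1 - I * ω) := by
  have hadd : 1 + I * ω ≠ 0 := fun h => by simpa using congrArg re h
  have hne : (1 + ω * I) / (1 - ω * I) ≠ 0 := by
    rw [mul_comm (ω : ℂ) I]
    exact div_ne_zero hadd (one_sub_I_mul_ne_zero ω)
  have hcoeff (L : ℂ) : 2 * (-I / 2 * L) * I = L := by linear_combination (-L) * I_sq
  rw [ofReal_arctan, arctan, hcoeff, exp_log hne, mul_comm (ω : ℂ) I]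

noncomputable def cayleyAngle (ω : ℝ) : AddCircle (2 * π) := (2 * Real.arctan ω : ℝ)

noncomputable def cayleyWeight (ω : ℝ) : ℂ := (π : ℂ)⁻¹ ^ (1 / 2 : ℂ) * (1 - I * ω)⁻¹

@[fun_prop]
theorem continuous_cayleyAngle : Continuous cayleyAngle :=
  (AddCircle.continuous_mk' _).comp (continuous_const.mul Real.continuous_arctan)

theorem cayleyAngle_injective : Function.Injective cayleyAngle := by
  have hmem (ω : ℝ) : 2 * Real.arctan ω ∈ Ico (-π) (-π + 2 * π) := by
    have h := range_two_mul_arctan ▸ mem_range_self (f := fun ω => 2 * Real.arctan ω) ω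
    exact ⟨h.1.le, by linarith [h.2]⟩
  intro a b hab
  have := (AddCircle.coe_eq_coe_iff_of_mem_Ico (hmem a) (hmem b)).mp hab
  exact Real.arctan_injective (by linarith)

theorem measurableEmbedding_cayleyAngle : MeasurableEmbedding cayleyAngle :=
  continuous_cayleyAngle.measurableEmbedding cayleyAngle_injective

theorem fourier_cayleyAngle (k : ℤ) (ω : ℝ) :
    fourier k (cayleyAngle ω) = ((1 + I * ω) / (1 - I * ω)) ^ k := by
  rw [cayleyAngle, fourier_coe_apply, ← cexp_two_mul_arctan_mul_I, ← Complex.exp_int_mul]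
  congr 1
  have hπ : (π : ℂ) ≠ 0 := ofReal_ne_zero.mpr Real.pi_ne_zero
  push_cast
  field_simp

@[fun_prop]
theorem continuous_cayleyWeight : Continuous cayleyWeight :=
  continuous_const.mul <| (continuous_const.sub (continuous_const.mul continuous_ofReal)).inv₀
    one_sub_I_mul_ne_zero

theorem cayleyWeight_ne_zero (ω : ℝ) : cayleyWeight ω ≠ 0 := by
  refine mul_ne_zero ?_ (inv_ne_zero (one_sub_I_mul_ne_zero ω))
  simp [Real.pi_ne_zero]

theorem norm_cayleyWeight_sq (ω : ℝ) : ‖cayleyWeight ω‖ ^ 2 = (π * (1 + ω ^ 2))⁻¹ := by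
  have hconst : ‖(π : ℂ)⁻¹ ^ (1 / 2 : ℂ)‖ ^ 2 = π⁻¹ := by
    rw [← ofReal_inv, norm_cpow_eq_rpow_re_of_pos (inv_pos.mpr Real.pi_pos), ← Real.rpow_natCast,
      ← Real.rpow_mul (by positivity)]
    norm_num
  have hden : ‖1 - I * ω‖ ^ 2 = 1 + ω ^ 2 := by
    rw [Complex.sq_norm, normSq_apply]
    simp [sq]
  rw [cayleyWeight, norm_mul, mul_pow, hconst, norm_inv, inv_pow, hden, mul_inv]

theorem phi_eq_cayleyWeight_mul_fourier (k : ℤ) (ω : ℝ) :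
    phi k ω = cayleyWeight ω * fourier k (cayleyAngle ω) := by
  rw [phi, cayleyWeight, fourier_cayleyAngle]

theorem measurePreserving_cayleyAngle :
    MeasurePreserving cayleyAngle (volume.withDensity fun ω => ‖cayleyWeight ω‖ₑ ^ 2)
      AddCircle.haarAddCircle := by
  refine ⟨continuous_cayleyAngle.measurable, Measure.ext_of_lintegral _ fun g hg => ?_⟩
  have hdensity (ω : ℝ) : ‖cayleyWeight ω‖ₑ ^ 2 =
      ENNReal.ofReal (2 * π)⁻¹ * ENNReal.ofReal (2 / (1 + ω ^ 2)) := by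
    rw [← ofReal_norm, ← ENNReal.ofReal_pow (norm_nonneg _), norm_cayleyWeight_sq,
      ← ENNReal.ofReal_mul (by positivity)]
    congr 1
    field_simp
  have h2π : ENNReal.ofReal (2 * π)⁻¹ * ENNReal.ofReal (2 * π) = 1 := by
    rw [← ENNReal.ofReal_mul (by positivity), inv_mul_cancel₀ Real.two_pi_pos.ne',
      ENNReal.ofReal_one]
  have hgT : Measurable fun ω => g (cayleyAngle ω) := by fun_prop
  calc ∫⁻ x, g x ∂(volume.withDensity fun ω => ‖cayleyWeight ω‖ₑ ^ 2).map cayleyAngle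
      = ∫⁻ ω, ‖cayleyWeight ω‖ₑ ^ 2 * g (cayleyAngle ω) := by
        rw [lintegral_map hg continuous_cayleyAngle.measurable]
        exact lintegral_withDensity_eq_lintegral_mul _ (by fun_prop) hgT
    _ = ENNReal.ofReal (2 * π)⁻¹ *
          ∫⁻ ω, ENNReal.ofReal (2 / (1 + ω ^ 2)) * g ((2 * Real.arctan ω : ℝ)) := by
        simp_rw [hdensity, mul_assoc]
        exact lintegral_const_mul _ (by fun_prop)
    _ = ENNReal.ofReal (2 * π)⁻¹ * ∫⁻ θ in Ioc (-π) (-π + 2 * π), g θ := by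
        rw [← lintegral_Ioo_neg_pi_pi_eq_lintegral_two_mul_arctan fun θ => g θ,
          show -π + 2 * π = π by ring, setLIntegral_congr Ioo_ae_eq_Ioc]
    _ = ∫⁻ x, g x ∂AddCircle.haarAddCircle := by
        rw [AddCircle.lintegral_preimage, AddCircle.volume_eq_smul_haarAddCircle,
          lintegral_smul_measure, smul_eq_mul, ← mul_assoc, h2π, one_mul]

/-- The family `{φ_k : k ∈ ℤ}` is a complete orthonormal set in `L²(ℝ)` with the
inner product `⟨f, g⟩ = ∫ conj(f ω) * g ω dω`: each `φ_k` is square integrable,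
the family is orthonormal, and any square-integrable function orthogonal to all
`φ_k` vanishes almost everywhere (completeness). -/
theorem phi_complete_orthonormal :
    (∀ k : ℤ, MemLp (phi k) 2 (volume : Measure ℝ)) ∧
    (∀ j k : ℤ,
      (∫ ω : ℝ, (starRingEnd ℂ) (phi j ω) * phi k ω) = if j = k then 1 else 0) ∧
    (∀ f : ℝ → ℂ, MemLp f 2 (volume : Measure ℝ) →
      (∀ k : ℤ, (∫ ω : ℝ, (starRingEnd ℂ) (phi k ω) * f ω) = 0) →
      f =ᵐ[volume] 0) := by
  have hphi : phi = fun k ω => cayleyWeight ω * fourier k (cayleyAngle ω) :=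
    funext₂ phi_eq_cayleyWeight_mul_fourier
  have h : IsCompleteOrthonormal volume phi := hphi ▸
    isCompleteOrthonormal_fourier.weightedComp measurableEmbedding_cayleyAngle
      continuous_cayleyWeight.measurable cayleyWeight_ne_zero measurePreserving_cayleyAngle
  exact ⟨h.memLp, h.integral_conj_mul, h.ae_eq_zero⟩
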